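/- arXiv:2310.18301 — 2 statements merged into one kernel-verified Lean document; each statement's English description precedes it below -/
import Mathlib

section
/- Let o : [0,T] → ℂ be a continuous obstacle trajectory and let γ₁, γ₂ : [0,T] → ℂ be continuous with γ₁(t) ≠ o(t), γ₂(t) ≠ o(t) for all t, γ₁(0) = γ₂(0), and γ₁(T) = γ₂(T). Then γ₁ and γ₂ are homotopic relative to their endpoints through maps avoiding the obstacle (i.e., there exists a continuous f : [0,1]×[0,T] → ℂ with f(0,·)=γ₁, f(1,·)=γ₂, f(λ,0)=γ₁(0), f(λ,T)=γ₁(T), and f(λ,t) ≠ o(t) for all λ, t) if and only if Δθ(γ₁,o) = Δθ(γ₂,o). -/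
open Set Complex Classical

/-- `θ` is an angular lift of the trajectory `γ` relative to the obstacle trajectory `o`
on the time interval `[0, T]`. -/
def IsAngularLift (T : ℝ) (γ o : ℝ → ℂ) (θ : ℝ → ℝ) : Prop :=
  ContinuousOn θ (Icc 0 T) ∧
    ∀ t ∈ Icc 0 T, γ t - o t = (‖γ t - o t‖ : ℂ) * Complex.exp (θ t * Complex.I)

/-- The angular distance `Δθ(γ, o)`, i.e. `θ T - θ 0` for an(y) angular lift `θ` of `γ`
relative to `o` (this is independent of the chosen lift). -/
noncomputable def deltaTheta (T : ℝ) (γ o : ℝ → ℂ) : ℝ :=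
  if h : ∃ θ : ℝ → ℝ, IsAngularLift T γ o θ then h.choose T - h.choose 0 else 0

/-- The mode function with threshold `θh`:
`0` on `[-θh, θh)`, `k+1` on `[θh + kπ, θh + (k+1)π)` for `k ≥ 0`, and
`-(k+1)` on `[-(θh + (k+1)π), -(θh + kπ))` for `k ≥ 0`. -/
noncomputable def modeFn (θh x : ℝ) : ℤ :=
  if x < -θh then -⌈(-x - θh) / Real.pi⌉
  else if x < θh then 0
  else ⌊(x - θh) / Real.pi⌋ + 1

/-- The mode of trajectory `γ` with respect to obstacle `o`. -/
noncomputable def mode (θh T : ℝ) (γ o : ℝ → ℂ) : ℤ :=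
  modeFn θh (deltaTheta T γ o)

/-- `f` is a free-end homotopy from `γ₁` to `γ₂` amidst the obstacles `o j`,
with common start point `xs`. -/
def IsFreeEndHomotopy (θh T : ℝ) {M : ℕ} (o : Fin M → ℝ → ℂ) (xs : ℂ)
    (γ₁ γ₂ : ℝ → ℂ) (f : ℝ → ℝ → ℂ) : Prop :=
  ContinuousOn (fun p : ℝ × ℝ => f p.1 p.2) (Icc 0 1 ×ˢ Icc 0 T) ∧
  (∀ t ∈ Icc 0 T, f 0 t = γ₁ t) ∧
  (∀ t ∈ Icc 0 T, f 1 t = γ₂ t) ∧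
  (∀ lam ∈ Icc (0:ℝ) 1, f lam 0 = xs) ∧
  (∀ lam ∈ Icc (0:ℝ) 1, ∀ t ∈ Icc 0 T, ∀ j : Fin M, f lam t ≠ o j t) ∧
  (∀ lam ∈ Icc (0:ℝ) 1, ∀ j : Fin M, mode θh T (f lam) (o j) = mode θh T γ₁ (o j))

/-- `γ₁` and `γ₂` are free-end homotopic. -/
def FreeEndHomotopic (θh T : ℝ) {M : ℕ} (o : Fin M → ℝ → ℂ) (xs : ℂ)
    (γ₁ γ₂ : ℝ → ℂ) : Prop :=
  ∃ f : ℝ → ℝ → ℂ, IsFreeEndHomotopy θh T o xs γ₁ γ₂ f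

/-- `f` is a homotopy (with fixed start point `xs` and end point `xg`) from `γ₁` to `γ₂`
avoiding the obstacles `o j`. -/
def IsObstacleHomotopy (T : ℝ) {M : ℕ} (o : Fin M → ℝ → ℂ) (xs xg : ℂ)
    (γ₁ γ₂ : ℝ → ℂ) (f : ℝ → ℝ → ℂ) : Prop :=
  ContinuousOn (fun p : ℝ × ℝ => f p.1 p.2) (Icc 0 1 ×ˢ Icc 0 T) ∧
  (∀ t ∈ Icc 0 T, f 0 t = γ₁ t) ∧
  (∀ t ∈ Icc 0 T, f 1 t = γ₂ t) ∧
  (∀ lam ∈ Icc (0:ℝ) 1, f lam 0 = xs ∧ f lam T = xg) ∧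
  (∀ lam ∈ Icc (0:ℝ) 1, ∀ t ∈ Icc 0 T, ∀ j : Fin M, f lam t ≠ o j t)

/-- `γ₁` and `γ₂` are homotopic (rel the common endpoints) amidst the obstacles. -/
def ObstacleHomotopic (T : ℝ) {M : ℕ} (o : Fin M → ℝ → ℂ) (xs xg : ℂ)
    (γ₁ γ₂ : ℝ → ℂ) : Prop :=
  ∃ f : ℝ → ℝ → ℂ, IsObstacleHomotopy T o xs xg γ₁ γ₂ f

/-- A trajectory admissible for planning: continuous on `[0,T]`, starting at `xs`,
avoiding all obstacles. -/
def Admissible (T : ℝ) {M : ℕ} (o : Fin M → ℝ → ℂ) (xs : ℂ) (γ : ℝ → ℂ) : Prop :=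
  ContinuousOn γ (Icc 0 T) ∧ γ 0 = xs ∧ ∀ t ∈ Icc 0 T, ∀ j : Fin M, γ t ≠ o j t


/-- A continuous nonvanishing function on a compact convex set admits a continuous
logarithm. -/
lemma exists_log_lift {E : Type*} [NormedAddCommGroup E] [NormedSpace ℝ E]
    {K : Set E} (hK : IsCompact K) (hconv : Convex ℝ K) {p₀ : E} (hp₀ : p₀ ∈ K)
    {g : E → ℂ} (hg : ContinuousOn g K) (h0 : ∀ p ∈ K, g p ≠ 0) :
    ∃ h : E → ℂ, ContinuousOn h K ∧ ∀ p ∈ K, g p = Complex.exp (h p) := by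
  obtain ⟨pm, hpmK, hpm⟩ := hK.exists_isMinOn ⟨p₀, hp₀⟩ hg.norm
  set m : ℝ := ‖g pm‖ with hm_def
  have hm : 0 < m := norm_pos_iff.mpr (h0 pm hpmK)
  have hmle : ∀ p ∈ K, m ≤ ‖g p‖ := fun p hp => hpm hp
  have huc := hK.uniformContinuousOn_of_continuous hg
  rw [Metric.uniformContinuousOn_iff] at huc
  obtain ⟨δ, hδ, hδ'⟩ := huc m hm
  obtain ⟨r, hr⟩ := (Metric.isBounded_iff_subset_closedBall p₀).mp hK.isBounded
  obtain ⟨n, hn⟩ := exists_nat_gt (max r 0 / δ)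
  have hn0 : (0:ℝ) < n := lt_of_le_of_lt (div_nonneg (le_max_right r 0) hδ.le) hn
  set c : ℕ → E → E := fun k p => p₀ + ((k : ℝ) / n) • (p - p₀) with hc_def
  have hcK : ∀ k, k ≤ n → ∀ p ∈ K, c k p ∈ K := by
    intro k hk p hp
    refine hconv.add_smul_sub_mem hp₀ hp ⟨by positivity, ?_⟩
    rw [div_le_one hn0]
    exact_mod_cast hk
  have hdist : ∀ k, ∀ p ∈ K, dist (c (k+1) p) (c k p) < δ := by
    intro k p hp
    have h1 : c (k+1) p - c k p = ((1:ℝ)/n) • (p - p₀) := by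
      simp only [hc_def]
      rw [add_sub_add_left_eq_sub, ← sub_smul]
      congr 1
      push_cast
      ring
    have h2 : dist (c (k+1) p) (c k p) = ‖p - p₀‖ / n := by
      rw [dist_eq_norm, h1, norm_smul, Real.norm_eq_abs,
        _root_.abs_of_nonneg (by positivity : (0:ℝ) ≤ 1/(n:ℝ))]
      ring
    have h3 : ‖p - p₀‖ ≤ max r 0 :=
      le_trans (by rw [← dist_eq_norm]; exact hr hp) (le_max_left r 0)
    have h4 : max r 0 < n * δ := by
      have := (div_lt_iff₀ hδ).mp hn
      linarith
    rw [h2, div_lt_iff₀ hn0]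
    calc ‖p - p₀‖ ≤ max r 0 := h3
      _ < n * δ := h4
      _ = δ * n := by ring
  have hqslit : ∀ k, k < n → ∀ p ∈ K,
      g (c (k+1) p) / g (c k p) ∈ Complex.slitPlane := by
    intro k hk p hp
    have ha := hcK (k+1) hk p hp
    have hb := hcK k hk.le p hp
    have hgb := h0 _ hb
    have hlt : ‖g (c (k+1) p) - g (c k p)‖ < ‖g (c k p)‖ :=
      lt_of_lt_of_le
        (by rw [← dist_eq_norm]; exact hδ' _ ha _ hb (hdist k p hp)) (hmle _ hb)
    have hnorm : ‖g (c (k+1) p) / g (c k p) - 1‖ < 1 := by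
      rw [show g (c (k+1) p) / g (c k p) - 1
          = (g (c (k+1) p) - g (c k p)) / g (c k p) by field_simp]
      rw [norm_div]
      exact (div_lt_one (norm_pos_iff.mpr hgb)).mpr hlt
    have := Complex.mem_slitPlane_of_norm_lt_one hnorm
    simpa using this
  refine ⟨fun p => Complex.log (g p₀) +
      ∑ k ∈ Finset.range n, Complex.log (g (c (k+1) p) / g (c k p)), ?_, ?_⟩
  · apply continuousOn_const.add
    apply continuousOn_finset_sum
    intro k hk
    rw [Finset.mem_range] at hk
    have hcc : ∀ j, Continuous (c j) := fun j =>
      continuous_const.add ((continuous_id.sub continuous_const).const_smul _)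
    have hga : ContinuousOn (fun p => g (c (k+1) p)) K :=
      hg.comp (hcc (k+1)).continuousOn fun p hp => hcK (k+1) hk p hp
    have hgb : ContinuousOn (fun p => g (c k p)) K :=
      hg.comp (hcc k).continuousOn fun p hp => hcK k hk.le p hp
    exact (hga.div hgb fun p hp => h0 _ (hcK k hk.le p hp)).clog
      fun p hp => hqslit k hk p hp
  · intro p hp
    have key : ∀ j, j ≤ n → Complex.exp (Complex.log (g p₀) +
        ∑ k ∈ Finset.range j, Complex.log (g (c (k+1) p) / g (c k p))) = g (c j p) := by
      intro j
      induction j with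
      | zero =>
        intro _
        have hc0 : c 0 p = p₀ := by simp [hc_def]
        simp [hc0, Complex.exp_log (h0 p₀ hp₀)]
      | succ j ih =>
        intro hj
        have hj' : j ≤ n := Nat.le_of_succ_le hj
        have hbne := h0 _ (hcK j hj' p hp)
        have hane := h0 _ (hcK (j+1) hj p hp)
        rw [Finset.sum_range_succ, ← add_assoc, Complex.exp_add, ih hj',
          Complex.exp_log (div_ne_zero hane hbne), mul_comm,
          div_mul_cancel₀ _ hbne]
    have hcn : c n p = p := by
      simp only [hc_def]
      rw [div_self (ne_of_gt hn0), one_smul]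
      abel
    exact ((key n le_rfl).trans (congrArg g hcn)).symm


lemma isAngularLift_of_exp {T : ℝ} {γ o : ℝ → ℂ} {h : ℝ → ℂ}
    (hc : ContinuousOn h (Icc 0 T)) (he : ∀ t ∈ Icc 0 T, γ t - o t = Complex.exp (h t)) :
    IsAngularLift T γ o fun t => (h t).im := by
  refine ⟨Complex.continuous_im.comp_continuousOn hc, fun t ht => ?_⟩
  rw [he t ht]
  conv_lhs => rw [← Complex.re_add_im (h t)]
  rw [Complex.exp_add]
  congr 1
  have hn : ‖Complex.exp (h t)‖ = Real.exp ((h t).re) := by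
    rw [Complex.norm_exp]
  rw [hn, Complex.ofReal_exp]

lemma intValued_eqOn {a b : ℝ} (hab : a ≤ b) {d : ℝ → ℝ}
    (hd : ContinuousOn d (Icc a b))
    (hint : ∀ t ∈ Icc a b, ∃ n : ℤ, d t = 2 * Real.pi * n) :
    d b = d a := by
  by_contra hne
  obtain ⟨na, hna⟩ := hint a (left_mem_Icc.mpr hab)
  obtain ⟨nb, hnb⟩ := hint b (right_mem_Icc.mpr hab)
  have hπ := Real.pi_pos
  rcases lt_or_gt_of_ne hne with hlt | hlt
  · -- d b < d a, use value d a - π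
    have hba : (nb:ℝ) < na := by nlinarith
    have hba' : (nb:ℝ) + 1 ≤ na := by exact_mod_cast Int.add_one_le_iff.mpr (by exact_mod_cast hba)
    have hmem : d a - Real.pi ∈ Icc (d b) (d a) := ⟨by nlinarith, by nlinarith⟩
    obtain ⟨t, ht, hdt⟩ := intermediate_value_Icc' hab hd hmem
    obtain ⟨k, hk⟩ := hint t ht
    have h2 : (2*((na:ℝ) - k)) * Real.pi = 1 * Real.pi := by nlinarith
    have h3 : 2*((na:ℝ) - k) = 1 := mul_right_cancel₀ (ne_of_gt hπ) h2
    have h4 : (2*(na - k) : ℤ) = 1 := by exact_mod_cast h3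
    omega
  · have hba : (na:ℝ) < nb := by nlinarith
    have hba' : (na:ℝ) + 1 ≤ nb := by exact_mod_cast Int.add_one_le_iff.mpr (by exact_mod_cast hba)
    have hmem : d a + Real.pi ∈ Icc (d a) (d b) := ⟨by nlinarith, by nlinarith⟩
    obtain ⟨t, ht, hdt⟩ := intermediate_value_Icc hab hd hmem
    obtain ⟨k, hk⟩ := hint t ht
    have h2 : (2*((k:ℝ) - na)) * Real.pi = 1 * Real.pi := by nlinarith
    have h3 : 2*((k:ℝ) - na) = 1 := mul_right_cancel₀ (ne_of_gt hπ) h2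
    have h4 : (2*(k - na) : ℤ) = 1 := by exact_mod_cast h3
    omega

lemma isAngularLift_unique_delta {T : ℝ} {γ o : ℝ → ℂ} (hT : (0:ℝ) ≤ T)
    (hav : ∀ t ∈ Icc 0 T, γ t ≠ o t)
    {θ θ' : ℝ → ℝ} (h1 : IsAngularLift T γ o θ) (h2 : IsAngularLift T γ o θ') :
    θ T - θ 0 = θ' T - θ' 0 := by
  have hd : ContinuousOn (fun t => θ t - θ' t) (Icc 0 T) := h1.1.sub h2.1
  have hint : ∀ t ∈ Icc 0 T, ∃ n : ℤ, θ t - θ' t = 2*Real.pi*n := by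
    intro t ht
    have e1 := h1.2 t ht
    have e2 := h2.2 t ht
    have hnz : (‖γ t - o t‖ : ℂ) ≠ 0 := by
      simpa using norm_ne_zero_iff.mpr (sub_ne_zero.mpr (hav t ht))
    have e3 : Complex.exp (θ t * I) = Complex.exp (θ' t * I) :=
      mul_left_cancel₀ hnz (e1.symm.trans e2)
    obtain ⟨n, hn⟩ := Complex.exp_eq_exp_iff_exists_int.mp e3
    refine ⟨n, ?_⟩
    have hn' : ((θ t : ℂ)) * I = ((θ' t : ℂ) + n * (2*(Real.pi:ℂ))) * I := by
      rw [hn]; ring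
    have hc : ((θ t : ℂ)) = (θ' t : ℂ) + n * (2*(Real.pi:ℂ)) :=
      mul_right_cancel₀ Complex.I_ne_zero hn'
    have hr : θ t = θ' t + n * (2*Real.pi) := by exact_mod_cast hc
    rw [hr]; ring
  have := intValued_eqOn hT hd hint
  linarith [this]

lemma deltaTheta_eq_of_lift {T : ℝ} {γ o : ℝ → ℂ} (hT : (0:ℝ) ≤ T)
    (hav : ∀ t ∈ Icc 0 T, γ t ≠ o t) {θ : ℝ → ℝ} (hθ : IsAngularLift T γ o θ) :
    deltaTheta T γ o = θ T - θ 0 := by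
  have hex : ∃ θ, IsAngularLift T γ o θ := ⟨θ, hθ⟩
  unfold deltaTheta
  rw [dif_pos hex]
  exact isAngularLift_unique_delta hT hav hex.choose_spec hθ

lemma im_of_exp_eq {z w : ℂ} (h : Complex.exp z = Complex.exp w) :
    ∃ n : ℤ, z.im - w.im = 2*Real.pi*n := by
  obtain ⟨n, hn⟩ := Complex.exp_eq_exp_iff_exists_int.mp h
  refine ⟨n, ?_⟩
  rw [hn]
  simp [Complex.add_im, Complex.mul_im]
  ring


/-- Two trajectories avoiding a single obstacle and sharing their start
and end points are homotopic rel endpoints through obstacle-avoiding maps if and only if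
their angular distances relative to the obstacle coincide. -/
theorem homotopic_iff_deltaTheta_eq
    (T : ℝ) (hT : 0 < T) (γ₁ γ₂ o : ℝ → ℂ)
    (hγ₁ : ContinuousOn γ₁ (Icc 0 T)) (hγ₂ : ContinuousOn γ₂ (Icc 0 T))
    (ho : ContinuousOn o (Icc 0 T))
    (havoid₁ : ∀ t ∈ Icc 0 T, γ₁ t ≠ o t) (havoid₂ : ∀ t ∈ Icc 0 T, γ₂ t ≠ o t)
    (hstart : γ₁ 0 = γ₂ 0) (hend : γ₁ T = γ₂ T) :
    (∃ f : ℝ → ℝ → ℂ,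
      ContinuousOn (fun p : ℝ × ℝ => f p.1 p.2) (Icc 0 1 ×ˢ Icc 0 T) ∧
      (∀ t ∈ Icc 0 T, f 0 t = γ₁ t) ∧
      (∀ t ∈ Icc 0 T, f 1 t = γ₂ t) ∧
      (∀ lam ∈ Icc (0:ℝ) 1, f lam 0 = γ₁ 0 ∧ f lam T = γ₁ T) ∧
      (∀ lam ∈ Icc (0:ℝ) 1, ∀ t ∈ Icc 0 T, f lam t ≠ o t)) ↔
    deltaTheta T γ₁ o = deltaTheta T γ₂ o := by
  have hT0 : (0:ℝ) ≤ T := hT.le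
  have h0mem : (0:ℝ) ∈ Icc (0:ℝ) T := left_mem_Icc.mpr hT0
  have hTmem : T ∈ Icc (0:ℝ) T := right_mem_Icc.mpr hT0
  have h01 : (0:ℝ) ∈ Icc (0:ℝ) 1 := left_mem_Icc.mpr zero_le_one
  have h11 : (1:ℝ) ∈ Icc (0:ℝ) 1 := right_mem_Icc.mpr zero_le_one
  constructor
  · rintro ⟨f, hfc, hf0, hf1, hfend, hfav⟩
    have hKc : IsCompact (Icc (0:ℝ) 1 ×ˢ Icc (0:ℝ) T) := isCompact_Icc.prod isCompact_Icc
    have hKconv : Convex ℝ (Icc (0:ℝ) 1 ×ˢ Icc (0:ℝ) T) := (convex_Icc 0 1).prod (convex_Icc 0 T)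
    have h00K : ((0:ℝ), (0:ℝ)) ∈ Icc (0:ℝ) 1 ×ˢ Icc (0:ℝ) T := Set.mk_mem_prod h01 h0mem
    have hgc : ContinuousOn (fun p : ℝ × ℝ => f p.1 p.2 - o p.2) (Icc (0:ℝ) 1 ×ˢ Icc (0:ℝ) T) :=
      hfc.sub (ho.comp continuous_snd.continuousOn fun p hp => hp.2)
    have hgne : ∀ p ∈ Icc (0:ℝ) 1 ×ˢ Icc (0:ℝ) T, f p.1 p.2 - o p.2 ≠ 0 := fun p hp =>
      sub_ne_zero.mpr (hfav p.1 hp.1 p.2 hp.2)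
    obtain ⟨H, hHc, hHe⟩ := exists_log_lift hKc hKconv h00K hgc hgne
    have hslice : ∀ lam ∈ Icc (0:ℝ) 1,
        IsAngularLift T (f lam) o fun t => (H (lam, t)).im := by
      intro lam hlam
      refine isAngularLift_of_exp ?_ fun t ht => hHe (lam, t) (Set.mk_mem_prod hlam ht)
      exact hHc.comp (Continuous.prodMk_right lam).continuousOn
        fun t ht => Set.mk_mem_prod hlam ht
    have hlift1 : IsAngularLift T γ₁ o fun t => (H (0, t)).im := by
      obtain ⟨hc, he⟩ := hslice 0 h01
      refine ⟨hc, fun t ht => ?_⟩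
      have := he t ht
      rwa [hf0 t ht] at this
    have hlift2 : IsAngularLift T γ₂ o fun t => (H (1, t)).im := by
      obtain ⟨hc, he⟩ := hslice 1 h11
      refine ⟨hc, fun t ht => ?_⟩
      have := he t ht
      rwa [hf1 t ht] at this
    have hd1 : deltaTheta T γ₁ o = (H (0, T)).im - (H (0, 0)).im :=
      deltaTheta_eq_of_lift hT0 havoid₁ hlift1
    have hd2 : deltaTheta T γ₂ o = (H (1, T)).im - (H (1, 0)).im :=
      deltaTheta_eq_of_lift hT0 havoid₂ hlift2
    have hDc : ContinuousOn (fun lam : ℝ =>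
        (((H (lam, T)).im - (H (lam, 0)).im) - ((H (0, T)).im - (H (0, 0)).im)))
        (Icc (0:ℝ) 1) := by
      have cT : ContinuousOn (fun lam : ℝ => (H (lam, T)).im) (Icc (0:ℝ) 1) :=
        Complex.continuous_im.comp_continuousOn
          (hHc.comp (continuous_id.prodMk continuous_const).continuousOn
            fun lam hlam => Set.mk_mem_prod hlam hTmem)
      have c0 : ContinuousOn (fun lam : ℝ => (H (lam, 0)).im) (Icc (0:ℝ) 1) :=
        Complex.continuous_im.comp_continuousOn
          (hHc.comp (continuous_id.prodMk continuous_const).continuousOn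
            fun lam hlam => Set.mk_mem_prod hlam h0mem)
      exact (cT.sub c0).sub continuousOn_const
    have hDint : ∀ lam ∈ Icc (0:ℝ) 1, ∃ n : ℤ,
        (((H (lam, T)).im - (H (lam, 0)).im) - ((H (0, T)).im - (H (0, 0)).im))
          = 2 * Real.pi * n := by
      intro lam hlam
      have eT : Complex.exp (H (lam, T)) = Complex.exp (H (0, T)) := by
        rw [← hHe (lam, T) (Set.mk_mem_prod hlam hTmem),
          ← hHe (0, T) (Set.mk_mem_prod h01 hTmem)]
        rw [(hfend lam hlam).2, (hfend 0 h01).2]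
      have e0 : Complex.exp (H (lam, 0)) = Complex.exp (H (0, 0)) := by
        rw [← hHe (lam, 0) (Set.mk_mem_prod hlam h0mem),
          ← hHe (0, 0) (Set.mk_mem_prod h01 h0mem)]
        rw [(hfend lam hlam).1, (hfend 0 h01).1]
      obtain ⟨nT, hnT⟩ := im_of_exp_eq eT
      obtain ⟨n0, hn0⟩ := im_of_exp_eq e0
      refine ⟨nT - n0, ?_⟩
      push_cast
      linarith
    have hD := intValued_eqOn zero_le_one hDc hDint
    simp only [sub_self] at hD
    rw [hd1, hd2]
    linarith
  · intro hΔ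
    obtain ⟨h₁, h₁c, h₁e⟩ := exists_log_lift isCompact_Icc (convex_Icc (0:ℝ) T) h0mem
      (g := fun t => γ₁ t - o t) (hγ₁.sub ho) (fun t ht => sub_ne_zero.mpr (havoid₁ t ht))
    obtain ⟨h₂, h₂c, h₂e⟩ := exists_log_lift isCompact_Icc (convex_Icc (0:ℝ) T) h0mem
      (g := fun t => γ₂ t - o t) (hγ₂.sub ho) (fun t ht => sub_ne_zero.mpr (havoid₂ t ht))
    have he0 : Complex.exp (h₂ 0) = Complex.exp (h₁ 0) := by
      rw [← h₁e 0 h0mem, ← h₂e 0 h0mem, hstart]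
    obtain ⟨n, hn⟩ := Complex.exp_eq_exp_iff_exists_int.mp he0
    set h₂' : ℝ → ℂ := fun t => h₂ t - n * (2 * Real.pi * Complex.I) with hh2'
    have h₂'c : ContinuousOn h₂' (Icc 0 T) := h₂c.sub continuousOn_const
    have h₂'e : ∀ t ∈ Icc (0:ℝ) T, γ₂ t - o t = Complex.exp (h₂' t) := by
      intro t ht
      simp only [hh2']
      rw [Complex.exp_sub, Complex.exp_int_mul_two_pi_mul_I, div_one]
      exact h₂e t ht
    have h20 : h₂' 0 = h₁ 0 := by
      simp only [hh2']
      rw [hn]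
      ring
    have hl1 := isAngularLift_of_exp h₁c h₁e
    have hl2 := isAngularLift_of_exp h₂'c h₂'e
    have hd1 := deltaTheta_eq_of_lift hT0 havoid₁ hl1
    have hd2 := deltaTheta_eq_of_lift hT0 havoid₂ hl2
    have heT : Complex.exp (h₂' T) = Complex.exp (h₁ T) := by
      rw [← h₁e T hTmem, ← h₂'e T hTmem, hend]
    obtain ⟨m, hm⟩ := Complex.exp_eq_exp_iff_exists_int.mp heT
    have him : (h₂' T).im = (h₁ T).im := by
      rw [hd1, hd2] at hΔ
      have h20im : (h₂' 0).im = (h₁ 0).im := by rw [h20]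
      linarith
    have hmz : (m : ℤ) = 0 := by
      obtain ⟨k, hk⟩ := im_of_exp_eq heT
      have hk' : (0:ℝ) = 2 * Real.pi * m := by
        have := congrArg Complex.im hm
        simp [Complex.add_im, Complex.mul_im] at this
        rw [him] at this
        nlinarith [this]
      have : (m:ℝ) = 0 := by nlinarith [Real.pi_pos]
      exact_mod_cast this
    have hmT : h₂' T = h₁ T := by
      rw [hm, hmz]
      simp
    refine ⟨fun lam t => o t + Complex.exp ((1 - (lam:ℂ)) * h₁ t + (lam:ℂ) * h₂' t),
      ?_, ?_, ?_, ?_, ?_⟩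
    · apply ContinuousOn.add
      · exact ho.comp continuous_snd.continuousOn fun p hp => hp.2
      · have c1 : ContinuousOn (fun p : ℝ × ℝ => h₁ p.2) (Icc (0:ℝ) 1 ×ˢ Icc (0:ℝ) T) :=
          h₁c.comp continuous_snd.continuousOn fun p hp => hp.2
        have c2 : ContinuousOn (fun p : ℝ × ℝ => h₂' p.2) (Icc (0:ℝ) 1 ×ˢ Icc (0:ℝ) T) :=
          h₂'c.comp continuous_snd.continuousOn fun p hp => hp.2
        have cl : Continuous (fun p : ℝ × ℝ => ((p.1 : ℝ) : ℂ)) :=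
          Complex.continuous_ofReal.comp continuous_fst
        exact (((continuous_const.sub cl).continuousOn.mul c1).add
          (cl.continuousOn.mul c2)).cexp
    · intro t ht
      show o t + Complex.exp ((1 - ((0:ℝ):ℂ)) * h₁ t + ((0:ℝ):ℂ) * h₂' t) = γ₁ t
      have hcomb : (1 - ((0:ℝ):ℂ)) * h₁ t + ((0:ℝ):ℂ) * h₂' t = h₁ t := by
        push_cast; ring
      rw [hcomb, ← h₁e t ht]
      ring
    · intro t ht
      show o t + Complex.exp ((1 - ((1:ℝ):ℂ)) * h₁ t + ((1:ℝ):ℂ) * h₂' t) = γ₂ t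
      have hcomb : (1 - ((1:ℝ):ℂ)) * h₁ t + ((1:ℝ):ℂ) * h₂' t = h₂' t := by
        push_cast; ring
      rw [hcomb, ← h₂'e t ht]
      ring
    · intro lam hlam
      constructor
      · show o 0 + Complex.exp ((1 - (lam:ℂ)) * h₁ 0 + (lam:ℂ) * h₂' 0) = γ₁ 0
        have hcomb : (1 - (lam:ℂ)) * h₁ 0 + (lam:ℂ) * h₂' 0 = h₁ 0 := by
          rw [h20]; ring
        rw [hcomb, ← h₁e 0 h0mem]
        ring
      · show o T + Complex.exp ((1 - (lam:ℂ)) * h₁ T + (lam:ℂ) * h₂' T) = γ₁ T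
        have hcomb : (1 - (lam:ℂ)) * h₁ T + (lam:ℂ) * h₂' T = h₁ T := by
          rw [hmT]; ring
        rw [hcomb, ← h₁e T hTmem]
        ring
    · intro lam hlam t ht hEq
      have hEq' : o t + Complex.exp ((1 - (lam:ℂ)) * h₁ t + (lam:ℂ) * h₂' t) = o t := hEq
      exact Complex.exp_ne_zero _ (add_eq_left.mp hEq')
end

section
/- Let o : [0,T] → ℂ be a continuous obstacle trajectory and let f : [0,1]×[0,T] → ℂ be a continuous map with f(λ,t) ≠ o(t) for all λ ∈ [0,1], t ∈ [0,T]. Then the angular distance of the intermediate trajectories varies continuously in the homotopy parameter: the function λ ↦ Δθ(f(λ,·), o) is continuous on [0,1]. -/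
open Set Complex Classical

namespace DeltaThetaAux

lemma slit_of_close_one {z : ℂ} (h : ‖z - 1‖ < 1) : z ∈ Complex.slitPlane := by
  have := Complex.mem_slitPlane_of_norm_lt_one h
  simpa using this

lemma exp_arg_mul_I {z : ℂ} (hz : z ≠ 0) :
    Complex.exp (z.arg * Complex.I) = z / (‖z‖ : ℂ) := by
  have hne : ((‖z‖ : ℝ) : ℂ) ≠ 0 := by
    simpa using norm_ne_zero_iff.mpr hz
  rw [eq_div_iff hne, mul_comm]
  exact Complex.norm_mul_exp_arg_mul_I z

lemma real_eq_of_exp_eq {x y : ℝ}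
    (h : Complex.exp (x * Complex.I) = Complex.exp (y * Complex.I)) :
    ∃ n : ℤ, x - y = n * (2 * Real.pi) := by
  rw [Complex.exp_eq_exp_iff_exists_int] at h
  obtain ⟨n, hn⟩ := h
  refine ⟨n, ?_⟩
  have h0 : ((x - y - n * (2 * Real.pi) : ℝ) : ℂ) * Complex.I = 0 := by
    push_cast
    linear_combination hn
  rcases mul_eq_zero.mp h0 with h' | h'
  · have := Complex.ofReal_eq_zero.mp h'
    linarith
  · exact absurd h' Complex.I_ne_zero

lemma div_unit_triple {z1 z0 : ℂ} (h1 : z1 ≠ 0) (h0 : z0 ≠ 0) :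
    (z1 / (‖z1‖ : ℂ)) / (z0 / (‖z0‖ : ℂ)) / ((z1 / z0) / (((‖z1‖ / ‖z0‖ : ℝ)) : ℂ)) = 1 := by
  have a1 : ((‖z1‖ : ℝ) : ℂ) ≠ 0 := by simpa using norm_ne_zero_iff.mpr h1
  have a0 : ((‖z0‖ : ℝ) : ℂ) ≠ 0 := by simpa using norm_ne_zero_iff.mpr h0
  push_cast
  have key : (z1 / (‖z1‖ : ℂ)) / (z0 / (‖z0‖ : ℂ)) = (z1 / z0) / ((‖z1‖ : ℂ) / (‖z0‖ : ℂ)) := by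
    ring
  rw [key]
  exact div_self (div_ne_zero (div_ne_zero h1 h0) (div_ne_zero a1 a0))

/-- A continuous function on `[0, T]` taking values in `2πℤ` takes the same value
at the endpoints. -/
lemma const_of_int {T : ℝ} (hT : 0 ≤ T) {d : ℝ → ℝ} (hd : ContinuousOn d (Icc 0 T))
    (hint : ∀ t ∈ Icc 0 T, ∃ n : ℤ, d t = n * (2 * Real.pi)) : d T = d 0 := by
  obtain ⟨n0, h0⟩ := hint 0 (left_mem_Icc.mpr hT)
  obtain ⟨nT, hTeq⟩ := hint T (right_mem_Icc.mpr hT)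
  by_contra hne
  have hpi := Real.pi_pos
  have hn0T : n0 ≠ nT := by
    intro h; apply hne; rw [hTeq, h0, h]
  have hIVT : uIcc (d 0) (d T) ⊆ d '' uIcc 0 T :=
    intermediate_value_uIcc (by rwa [uIcc_of_le hT])
  set a : ℤ := min n0 nT with ha_def
  set b : ℤ := max n0 nT with hb_def
  have hab : a + 1 ≤ b := by
    rcases min_cases n0 nT with ⟨h1, h2⟩ | ⟨h1, h2⟩ <;>
      rcases max_cases n0 nT with ⟨h3, h4⟩ | ⟨h3, h4⟩ <;> omega
  have habR : (a : ℝ) + 1 ≤ (b : ℝ) := by exact_mod_cast hab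
  set y : ℝ := (a : ℝ) * (2 * Real.pi) + Real.pi with hy_def
  have hymem : y ∈ uIcc (d 0) (d T) := by
    have hmin : min (d 0) (d T) = (a : ℝ) * (2 * Real.pi) := by
      rcases min_cases n0 nT with ⟨h1, h2⟩ | ⟨h1, h2⟩
      · rw [h0, hTeq, ha_def, h1, min_eq_left]
        have : (n0 : ℝ) ≤ nT := by exact_mod_cast h2
        nlinarith
      · rw [h0, hTeq, ha_def, h1, min_eq_right]
        have : (nT : ℝ) ≤ n0 := by exact_mod_cast h2.le
        nlinarith
    have hmax : max (d 0) (d T) = (b : ℝ) * (2 * Real.pi) := by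
      rcases max_cases n0 nT with ⟨h1, h2⟩ | ⟨h1, h2⟩
      · rw [h0, hTeq, hb_def, h1, max_eq_left]
        have : (nT : ℝ) ≤ n0 := by exact_mod_cast h2
        nlinarith
      · rw [h0, hTeq, hb_def, h1, max_eq_right]
        have : (n0 : ℝ) ≤ nT := by exact_mod_cast h2.le
        nlinarith
    rw [Set.mem_uIcc]
    rcases le_total (d 0) (d T) with h | h
    · left
      constructor
      · rw [← min_eq_left h, hmin, hy_def]; linarith
      · rw [← max_eq_right h, hmax, hy_def]; nlinarith
    · right
      constructor
      · rw [← min_eq_right h, hmin, hy_def]; linarith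
      · rw [← max_eq_left h, hmax, hy_def]; nlinarith
  obtain ⟨t, ht, hty⟩ := hIVT hymem
  obtain ⟨n, hn⟩ := hint t (by rwa [uIcc_of_le hT] at ht)
  rw [hn, hy_def] at hty
  have h2 : (2 * n : ℝ) * Real.pi = (2 * a + 1 : ℝ) * Real.pi := by ring_nf; ring_nf at hty; linarith
  have h3 : (2 * n : ℝ) = (2 * a + 1 : ℝ) := mul_right_cancel₀ hpi.ne' h2
  have h4 : (2 * n : ℤ) = 2 * a + 1 := by exact_mod_cast h3
  omega

/-- Existence of a continuous angular lift for a continuous non-vanishing function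
on `[0, T]`. -/
lemma lift_exists {T : ℝ} (hT : 0 ≤ T) {g : ℝ → ℂ} (hg : ContinuousOn g (Icc 0 T))
    (hne : ∀ t ∈ Icc 0 T, g t ≠ 0) :
    ∃ θ : ℝ → ℝ, ContinuousOn θ (Icc 0 T) ∧
      ∀ t ∈ Icc 0 T, g t = (‖g t‖ : ℂ) * Complex.exp (θ t * Complex.I) := by
  obtain ⟨tm, htm, hmin⟩ := isCompact_Icc.exists_isMinOn (nonempty_Icc.mpr hT) hg.norm
  set m : ℝ := ‖g tm‖ with hm_def
  have hm : 0 < m := norm_pos_iff.mpr (hne tm htm)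
  have hmle : ∀ t ∈ Icc 0 T, m ≤ ‖g t‖ := fun t ht => hmin ht
  obtain ⟨δ, hδ, hδ'⟩ := Metric.uniformContinuousOn_iff.mp
    (isCompact_Icc.uniformContinuousOn_of_continuous hg) m hm
  obtain ⟨n₀, hn₀⟩ := exists_nat_gt (T / δ)
  set n : ℕ := n₀ + 1 with hn_def
  have hnpos : 0 < (n : ℝ) := by positivity
  have hTn : 0 ≤ T / n := by positivity
  have hTδn : T / δ < (n : ℝ) := hn₀.trans_le (by exact_mod_cast Nat.le_succ n₀)
  have hTn' : T / n < δ := by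
    rw [div_lt_iff₀ hnpos]
    have h := (div_lt_iff₀ hδ).mp hTδn
    linarith
  set p : ℕ → ℝ := fun j => (j : ℝ) * (T / n) with hp_def
  have hpmono : ∀ j : ℕ, p j ≤ p (j + 1) := by
    intro j
    have : (j : ℝ) ≤ ((j + 1 : ℕ) : ℝ) := by exact_mod_cast Nat.le_succ j
    exact mul_le_mul_of_nonneg_right this hTn
  have hpn : p n = T := by
    simp only [hp_def]
    field_simp
  have hp0 : p 0 = 0 := by simp [hp_def]
  have hpmem : ∀ j, j ≤ n → p j ∈ Icc 0 T := by
    intro j hj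
    constructor
    · simp only [hp_def]; positivity
    · have : p j ≤ p n := mul_le_mul_of_nonneg_right (by exact_mod_cast hj) hTn
      rwa [hpn] at this
  set c : ℕ → ℝ → ℝ := fun j t => max (p j) (min t (p (j + 1))) with hc_def
  have hcmem : ∀ j t, c j t ∈ Icc (p j) (p (j + 1)) := by
    intro j t
    exact ⟨le_max_left _ _, max_le (hpmono j) (min_le_right _ _)⟩
  have hcIcc : ∀ j, j + 1 ≤ n → ∀ t, c j t ∈ Icc 0 T := by
    intro j hj t
    constructor
    · exact le_trans (hpmem j (by omega)).1 (hcmem j t).1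
    · exact le_trans (hcmem j t).2 (hpmem (j + 1) hj).2
  have hpdiff : ∀ j : ℕ, p (j + 1) - p j = T / n := by
    intro j; simp only [hp_def]; push_cast; ring
  set q : ℕ → ℝ → ℂ := fun j t => g (c j t) / g (p j) with hq_def
  have hqclose : ∀ j, j + 1 ≤ n → ∀ t ∈ Icc 0 T, ‖q j t - 1‖ < 1 := by
    intro j hj t ht
    have hpj := hpmem j (by omega)
    have hgp := hne (p j) hpj
    have hdist : dist (g (c j t)) (g (p j)) < m := by
      apply hδ' _ (hcIcc j hj t) _ hpj
      rw [Real.dist_eq, _root_.abs_of_nonneg (sub_nonneg.mpr (hcmem j t).1)]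
      have h2 := (hcmem j t).2
      have h3 := hpdiff j
      linarith
    simp only [hq_def]
    rw [div_sub_one hgp, norm_div, div_lt_one (norm_pos_iff.mpr hgp)]
    calc ‖g (c j t) - g (p j)‖ < m := by rwa [dist_eq_norm] at hdist
      _ ≤ ‖g (p j)‖ := hmle _ hpj
  have hqne : ∀ j, j + 1 ≤ n → ∀ t, q j t ≠ 0 := by
    intro j hj t
    exact div_ne_zero (hne _ (hcIcc j hj t)) (hne _ (hpmem j (by omega)))
  set θ : ℝ → ℝ := fun t => (g 0).arg + ∑ j ∈ Finset.range n, (q j t).arg with hθ_def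
  have hg0 : g 0 ≠ 0 := hne 0 (left_mem_Icc.mpr hT)
  refine ⟨θ, ?_, ?_⟩
  · apply ContinuousOn.add continuousOn_const
    apply continuousOn_finset_sum
    intro j hj
    have hj' : j + 1 ≤ n := Finset.mem_range.mp hj
    have hcc : Continuous (c j) := continuous_const.max (continuous_id.min continuous_const)
    have hgcc : ContinuousOn (fun t => g (c j t)) (Icc 0 T) :=
      hg.comp hcc.continuousOn fun t _ => hcIcc j hj' t
    have hqc : ContinuousOn (q j) (Icc 0 T) := hgcc.div_const _
    intro t ht
    exact (Complex.continuousAt_arg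
      (slit_of_close_one (hqclose j hj' t ht))).comp_continuousWithinAt (hqc t ht)
  · have tele : ∀ k, k ≤ n → ∀ t ∈ Icc 0 T,
        g 0 * ∏ j ∈ Finset.range k, q j t = g (min t (p k)) := by
      intro k
      induction k with
      | zero => intro _ t ht; simp [hp0, min_eq_right ht.1]
      | succ k ih =>
        intro hk t ht
        rw [Finset.prod_range_succ, ← mul_assoc, ih (by omega) t ht]
        rcases le_total t (p k) with h | h
        · have h2 : min t (p (k + 1)) = t := min_eq_left (h.trans (hpmono k))
          have h3 : c k t = p k := by
            simp only [hc_def]; rw [h2]; exact max_eq_left h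
          simp only [hq_def]
          rw [min_eq_left h, h2, h3, div_self (hne _ (hpmem k (by omega))), mul_one]
        · have h3 : c k t = min t (p (k + 1)) := by
            simp only [hc_def]
            exact max_eq_right (le_min h (hpmono k))
          simp only [hq_def]
          rw [min_eq_right h, h3, mul_comm, div_mul_cancel₀ _ (hne _ (hpmem k (by omega)))]
    intro t ht
    have hprod : g 0 * ∏ j ∈ Finset.range n, q j t = g t := by
      rw [tele n le_rfl t ht, hpn, min_eq_left ht.2]
    have hθeq : ((θ t : ℝ) : ℂ) * Complex.I =
        ((g 0).arg : ℂ) * Complex.I + ∑ j ∈ Finset.range n, (((q j t).arg : ℂ) * Complex.I) := by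
      simp only [hθ_def]
      push_cast
      rw [add_mul, Finset.sum_mul]
    have hexp : Complex.exp (θ t * Complex.I) =
        (g 0 / (‖g 0‖ : ℂ)) * ∏ j ∈ Finset.range n, (q j t / (‖q j t‖ : ℂ)) := by
      rw [hθeq, Complex.exp_add, Complex.exp_sum, exp_arg_mul_I hg0]
      congr 1
      exact Finset.prod_congr rfl fun j hj =>
        exp_arg_mul_I (hqne j (Finset.mem_range.mp hj) t)
    set R : ℝ := ‖g 0‖ * ∏ j ∈ Finset.range n, ‖q j t‖ with hR_def
    have hRpos : 0 < R := by
      apply mul_pos (norm_pos_iff.mpr hg0)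
      exact Finset.prod_pos fun j hj =>
        norm_pos_iff.mpr (hqne j (Finset.mem_range.mp hj) t)
    have hRC : ((R : ℝ) : ℂ) = (‖g 0‖ : ℂ) * ∏ j ∈ Finset.range n, (‖q j t‖ : ℂ) := by
      rw [hR_def]
      push_cast [Complex.ofReal_prod]
      ring
    have hexp2 : Complex.exp (θ t * Complex.I) = g t / (R : ℂ) := by
      rw [hexp, Finset.prod_div_distrib, div_mul_div_comm, hprod, hRC]
    have hRne : ((R : ℝ) : ℂ) ≠ 0 := Complex.ofReal_ne_zero.mpr hRpos.ne'
    have habs : ‖g t‖ = R := by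
      have h1 : ‖Complex.exp ((θ t : ℂ) * Complex.I)‖ = 1 := by
        exact Complex.norm_exp_ofReal_mul_I (θ t)
      rw [hexp2] at h1
      rw [norm_div] at h1
      have h2 : ‖((R : ℝ) : ℂ)‖ = R := by
        rw [Complex.norm_real]
        exact abs_of_pos hRpos
      rw [h2] at h1
      exact (div_eq_one_iff_eq hRpos.ne').mp h1
    rw [hexp2, habs, mul_comm, div_mul_cancel₀ _ hRne]

/-- Uniqueness of the angular distance: any two lifts give the same endpoint difference. -/
lemma delta_unique {T : ℝ} (hT : 0 ≤ T) {γ o : ℝ → ℂ}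
    (hne : ∀ t ∈ Icc 0 T, γ t ≠ o t) {θ₁ θ₂ : ℝ → ℝ}
    (h₁ : IsAngularLift T γ o θ₁) (h₂ : IsAngularLift T γ o θ₂) :
    θ₁ T - θ₁ 0 = θ₂ T - θ₂ 0 := by
  have key : ∀ t ∈ Icc 0 T, ∃ nn : ℤ, θ₁ t - θ₂ t = nn * (2 * Real.pi) := by
    intro t ht
    have hgne : γ t - o t ≠ 0 := sub_ne_zero.mpr (hne t ht)
    have hnorm : ((‖γ t - o t‖ : ℝ) : ℂ) ≠ 0 := by
      simpa using norm_ne_zero_iff.mpr hgne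
    have heq := (h₁.2 t ht).symm.trans (h₂.2 t ht)
    exact real_eq_of_exp_eq (mul_left_cancel₀ hnorm heq)
  have hd : θ₁ T - θ₂ T = θ₁ 0 - θ₂ 0 := const_of_int hT (h₁.1.sub h₂.1) key
  linarith

lemma deltaTheta_eq {T : ℝ} (hT : 0 ≤ T) {γ o : ℝ → ℂ}
    (hne : ∀ t ∈ Icc 0 T, γ t ≠ o t) {θ : ℝ → ℝ} (hθ : IsAngularLift T γ o θ) :
    deltaTheta T γ o = θ T - θ 0 := by
  have h : ∃ θ' : ℝ → ℝ, IsAngularLift T γ o θ' := ⟨θ, hθ⟩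
  rw [deltaTheta, dif_pos h]
  exact delta_unique hT hne h.choose_spec hθ

end DeltaThetaAux

open DeltaThetaAux in
/-- Along a continuous obstacle-avoiding homotopy, the angular distance
of the intermediate trajectories varies continuously in the homotopy parameter. -/
theorem continuousOn_deltaTheta_of_homotopy
    (T : ℝ) (hT : 0 < T) (o : ℝ → ℂ) (ho : ContinuousOn o (Icc 0 T))
    (f : ℝ → ℝ → ℂ)
    (hf : ContinuousOn (fun p : ℝ × ℝ => f p.1 p.2) (Icc 0 1 ×ˢ Icc 0 T))
    (havoid : ∀ lam ∈ Icc (0:ℝ) 1, ∀ t ∈ Icc 0 T, f lam t ≠ o t) :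
    ContinuousOn (fun lam => deltaTheta T (f lam) o) (Icc 0 1) := by
  have hT' : (0 : ℝ) ≤ T := hT.le
  set g : ℝ → ℝ → ℂ := fun lam t => f lam t - o t with hg_def
  have hgc : ContinuousOn (fun p : ℝ × ℝ => g p.1 p.2) (Icc 0 1 ×ˢ Icc 0 T) :=
    hf.sub (ho.comp continuous_snd.continuousOn fun p hp => hp.2)
  have hgc1 : ∀ lam ∈ Icc (0:ℝ) 1, ContinuousOn (g lam) (Icc 0 T) := by
    intro lam hlam
    have : ContinuousOn (fun t : ℝ => (lam, t)) (Icc 0 T) :=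
      (continuous_const.prodMk continuous_id).continuousOn
    exact hgc.comp this fun t ht => ⟨hlam, ht⟩
  have hgne : ∀ lam ∈ Icc (0:ℝ) 1, ∀ t ∈ Icc 0 T, g lam t ≠ 0 :=
    fun lam hlam t ht => sub_ne_zero.mpr (havoid lam hlam t ht)
  have hlift : ∀ lam ∈ Icc (0:ℝ) 1, ∃ θ : ℝ → ℝ, IsAngularLift T (f lam) o θ := by
    intro lam hlam
    obtain ⟨θ, hθc, hθ⟩ := lift_exists hT' (hgc1 lam hlam) (hgne lam hlam)
    exact ⟨θ, hθc, hθ⟩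
  intro lam0 hlam0
  obtain ⟨θ0, hθ0⟩ := hlift lam0 hlam0
  obtain ⟨tm, htm, hmin⟩ :=
    isCompact_Icc.exists_isMinOn (nonempty_Icc.mpr hT') (hgc1 lam0 hlam0).norm
  set m : ℝ := ‖g lam0 tm‖ with hm_def
  have hm : 0 < m := norm_pos_iff.mpr (hgne lam0 hlam0 tm htm)
  have hmle : ∀ t ∈ Icc 0 T, m ≤ ‖g lam0 t‖ := fun t ht => hmin ht
  obtain ⟨δ, hδ, hδ'⟩ := Metric.uniformContinuousOn_iff.mp
    ((isCompact_Icc.prod isCompact_Icc).uniformContinuousOn_of_continuous hgc) m hm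
  -- the local comparison formula
  have key : ∀ lam ∈ Icc (0:ℝ) 1, dist lam lam0 < δ →
      deltaTheta T (f lam) o = deltaTheta T (f lam0) o +
        ((g lam T / g lam0 T).arg - (g lam 0 / g lam0 0).arg) := by
    intro lam hlam hd
    obtain ⟨θ1, hθ1⟩ := hlift lam hlam
    have hvne : ∀ t ∈ Icc 0 T, g lam t / g lam0 t ≠ 0 :=
      fun t ht => div_ne_zero (hgne lam hlam t ht) (hgne lam0 hlam0 t ht)
    have hvslit : ∀ t ∈ Icc 0 T, g lam t / g lam0 t ∈ Complex.slitPlane := by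
      intro t ht
      apply slit_of_close_one
      have h1 : dist (g lam t) (g lam0 t) < m := by
        apply hδ' (lam, t) ⟨hlam, ht⟩ (lam0, t) ⟨hlam0, ht⟩
        rw [Prod.dist_eq]
        simp only [dist_self]
        exact max_lt hd hδ
      rw [div_sub_one (hgne lam0 hlam0 t ht), norm_div,
        div_lt_one (norm_pos_iff.mpr (hgne lam0 hlam0 t ht))]
      calc ‖g lam t - g lam0 t‖ < m := by rwa [dist_eq_norm] at h1
        _ ≤ ‖g lam0 t‖ := hmle t ht
    have hvcont : ContinuousOn (fun t => g lam t / g lam0 t) (Icc 0 T) :=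
      (hgc1 lam hlam).div (hgc1 lam0 hlam0) fun t ht => hgne lam0 hlam0 t ht
    set d : ℝ → ℝ := fun t => θ1 t - θ0 t - (g lam t / g lam0 t).arg with hd_def
    have hargc : ContinuousOn (fun t => (g lam t / g lam0 t).arg) (Icc 0 T) := by
      intro t ht
      exact ContinuousAt.comp_continuousWithinAt_of_eq (Complex.continuousAt_arg (hvslit t ht))
        (hvcont t ht) rfl
    have hdc : ContinuousOn d (Icc 0 T) := (hθ1.1.sub hθ0.1).sub hargc
    have hint : ∀ t ∈ Icc 0 T, ∃ nn : ℤ, d t = nn * (2 * Real.pi) := by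
      intro t ht
      have h1ne : g lam t ≠ 0 := hgne lam hlam t ht
      have h0ne : g lam0 t ≠ 0 := hgne lam0 hlam0 t ht
      have h1n : ((‖g lam t‖ : ℝ) : ℂ) ≠ 0 := by simpa using norm_ne_zero_iff.mpr h1ne
      have h0n : ((‖g lam0 t‖ : ℝ) : ℂ) ≠ 0 := by simpa using norm_ne_zero_iff.mpr h0ne
      have e1 : Complex.exp ((θ1 t : ℂ) * Complex.I) = g lam t / (‖g lam t‖ : ℂ) := by
        rw [eq_div_iff h1n, mul_comm]
        exact (hθ1.2 t ht).symm
      have e0 : Complex.exp ((θ0 t : ℂ) * Complex.I) = g lam0 t / (‖g lam0 t‖ : ℂ) := by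
        rw [eq_div_iff h0n, mul_comm]
        exact (hθ0.2 t ht).symm
      have ev : Complex.exp (((g lam t / g lam0 t).arg : ℂ) * Complex.I)
          = (g lam t / g lam0 t) / (‖g lam t / g lam0 t‖ : ℂ) :=
        exp_arg_mul_I (hvne t ht)
      have hcast : ((d t : ℝ) : ℂ) * Complex.I =
          (θ1 t : ℂ) * Complex.I - (θ0 t : ℂ) * Complex.I
            - ((g lam t / g lam0 t).arg : ℂ) * Complex.I := by
        simp only [hd_def]
        push_cast
        ring
      have hexp1 : Complex.exp ((d t : ℂ) * Complex.I) = 1 := by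
        rw [hcast, Complex.exp_sub, Complex.exp_sub, e1, e0, ev, norm_div]
        exact div_unit_triple h1ne h0ne
      have : Complex.exp ((d t : ℂ) * Complex.I) = Complex.exp ((0 : ℝ) * Complex.I) := by
        rw [hexp1]; simp
      obtain ⟨nn, hnn⟩ := real_eq_of_exp_eq this
      exact ⟨nn, by linarith⟩
    have hdTd0 : d T = d 0 := const_of_int hT' hdc hint
    have hΔ1 : deltaTheta T (f lam) o = θ1 T - θ1 0 :=
      deltaTheta_eq hT' (havoid lam hlam) hθ1
    have hΔ0 : deltaTheta T (f lam0) o = θ0 T - θ0 0 :=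
      deltaTheta_eq hT' (havoid lam0 hlam0) hθ0
    simp only [hd_def] at hdTd0
    rw [hΔ1, hΔ0]
    linarith
  -- now conclude continuity at lam0
  have hmemT : T ∈ Icc (0:ℝ) T := right_mem_Icc.mpr hT'
  have hmem0 : (0:ℝ) ∈ Icc (0:ℝ) T := left_mem_Icc.mpr hT'
  have hargT : Filter.Tendsto (fun lam => (g lam T / g lam0 T).arg)
      (nhdsWithin lam0 (Icc (0:ℝ) 1)) (nhds 0) := by
    have hgT : ContinuousOn (fun lam => g lam T) (Icc (0:ℝ) 1) := by
      have : ContinuousOn (fun lam : ℝ => (lam, T)) (Icc (0:ℝ) 1) :=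
        (continuous_id.prodMk continuous_const).continuousOn
      exact hgc.comp this fun lam hlam => ⟨hlam, hmemT⟩
    have hq : Filter.Tendsto (fun lam => g lam T / g lam0 T)
        (nhdsWithin lam0 (Icc (0:ℝ) 1)) (nhds 1) := by
      have h1 := (hgT lam0 hlam0).div (continuousWithinAt_const (b := g lam0 T))
        (hgne lam0 hlam0 T hmemT)
      have h2 : Filter.Tendsto (fun lam => g lam T / g lam0 T)
          (nhdsWithin lam0 (Icc (0:ℝ) 1)) (nhds (g lam0 T / g lam0 T)) := h1
      rwa [div_self (hgne lam0 hlam0 T hmemT)] at h2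
    have harg : ContinuousAt Complex.arg 1 :=
      Complex.continuousAt_arg (by simp [Complex.mem_slitPlane_iff])
    have := harg.tendsto.comp hq
    rwa [Complex.arg_one] at this
  have harg0 : Filter.Tendsto (fun lam => (g lam 0 / g lam0 0).arg)
      (nhdsWithin lam0 (Icc (0:ℝ) 1)) (nhds 0) := by
    have hg0 : ContinuousOn (fun lam => g lam 0) (Icc (0:ℝ) 1) := by
      have : ContinuousOn (fun lam : ℝ => (lam, (0:ℝ))) (Icc (0:ℝ) 1) :=
        (continuous_id.prodMk continuous_const).continuousOn
      exact hgc.comp this fun lam hlam => ⟨hlam, hmem0⟩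
    have hq : Filter.Tendsto (fun lam => g lam 0 / g lam0 0)
        (nhdsWithin lam0 (Icc (0:ℝ) 1)) (nhds 1) := by
      have h1 := (hg0 lam0 hlam0).div (continuousWithinAt_const (b := g lam0 0))
        (hgne lam0 hlam0 0 hmem0)
      have h2 : Filter.Tendsto (fun lam => g lam 0 / g lam0 0)
          (nhdsWithin lam0 (Icc (0:ℝ) 1)) (nhds (g lam0 0 / g lam0 0)) := h1
      rwa [div_self (hgne lam0 hlam0 0 hmem0)] at h2
    have harg : ContinuousAt Complex.arg 1 :=
      Complex.continuousAt_arg (by simp [Complex.mem_slitPlane_iff])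
    have := harg.tendsto.comp hq
    rwa [Complex.arg_one] at this
  have hev : ∀ᶠ lam in nhdsWithin lam0 (Icc (0:ℝ) 1),
      deltaTheta T (f lam) o = deltaTheta T (f lam0) o +
        ((g lam T / g lam0 T).arg - (g lam 0 / g lam0 0).arg) := by
    have h1 : ∀ᶠ lam in nhdsWithin lam0 (Icc (0:ℝ) 1), lam ∈ Icc (0:ℝ) 1 :=
      eventually_mem_nhdsWithin
    have h2 : ∀ᶠ lam in nhdsWithin lam0 (Icc (0:ℝ) 1), dist lam lam0 < δ := by
      apply Filter.Eventually.filter_mono nhdsWithin_le_nhds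
      have : Metric.ball lam0 δ ∈ nhds lam0 := Metric.ball_mem_nhds _ hδ
      filter_upwards [this] with lam hlam
      exact Metric.mem_ball.mp hlam
    filter_upwards [h1, h2] with lam hlam hd
    exact key lam hlam hd
  have hfinal : Filter.Tendsto
      (fun lam => deltaTheta T (f lam0) o +
        ((g lam T / g lam0 T).arg - (g lam 0 / g lam0 0).arg))
      (nhdsWithin lam0 (Icc (0:ℝ) 1))
      (nhds (deltaTheta T (f lam0) o + (0 - 0))) :=
    Filter.Tendsto.add tendsto_const_nhds (hargT.sub harg0)
  have : Filter.Tendsto (fun lam => deltaTheta T (f lam) o)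
      (nhdsWithin lam0 (Icc (0:ℝ) 1)) (nhds (deltaTheta T (f lam0) o + (0 - 0))) :=
    hfinal.congr' (hev.mono fun lam h => h.symm)
  simpa [ContinuousWithinAt] using this
end
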